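/- arXiv:0705.1853 — 3 statements merged into one kernel-verified Lean document; each statement's English description precedes it below -/
import Mathlib

section
/- Let a > 0 and let j : ℝ → ℝ be twice continuously differentiable on [0, ∞). Suppose that j(t) ≥ 0 for all t ≥ 0, that j''(t) ≥ a² · j(t) for all t ≥ 0, and that j(t) → 0 as t → ∞. Then j(t) ≤ j(0) · exp(−a·t) for all t ≥ 0. -/
/-!
Put `h = j' + a j`. Then `h' - a h = j'' - a² j ≥ 0`, so `e^{-a t} h` is nondecreasing. If
`h (t₀) > 0` for some `t₀`, then `h ≥ h (t₀)` on `[t₀, ∞)`, and since `a j → 0` the derivative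
`j'` is eventually bounded below by a positive constant, which contradicts `j → 0`. Hence `h ≤ 0`,
i.e. `(e^{a t} j)' = e^{a t} h ≤ 0`, and so `e^{a t} j (t) ≤ j (0)`.
-/

open Real Set Filter Topology

theorem ContDiffOn.hasDerivAt_deriv {f : ℝ → ℝ} {s : Set ℝ} (hf : ContDiffOn ℝ 2 f s) {x : ℝ}
    (hx : s ∈ 𝓝 x) : HasDerivAt (deriv f) (deriv (deriv f) x) x :=
  ((((hf.mono interior_subset).deriv_of_isOpen isOpen_interior (m := 1) (by norm_num)
    ).differentiableOn one_ne_zero).differentiableAt (interior_mem_nhds.2 hx)).hasDerivAt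

section ExpWeighted

variable {s : Set ℝ} {a : ℝ} {f f' : ℝ → ℝ}

theorem monotoneOn_exp_neg_mul_mul (hs : Convex ℝ s) (hf : ContinuousOn f s)
    (hf' : ∀ x ∈ interior s, HasDerivAt f (f' x) x) (hle : ∀ x ∈ interior s, a * f x ≤ f' x) :
    MonotoneOn (fun t => exp (-a * t) * f t) s := by
  refine monotoneOn_of_hasDerivWithinAt_nonneg hs
    (((continuous_const.mul continuous_id).rexp).continuousOn.mul hf)
    (f' := fun x => exp (-a * x) * (f' x - a * f x)) (fun x hx => ?_)
    (fun x hx => mul_nonneg (exp_pos _).le (sub_nonneg.2 (hle x hx)))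
  have hexp : HasDerivAt (fun t => exp (-a * t)) (exp (-a * x) * -a) x := by
    simpa using ((hasDerivAt_id x).const_mul (-a)).exp
  exact (hexp.mul (hf' x hx)).hasDerivWithinAt.congr_deriv (by ring)

theorem antitoneOn_exp_mul_mul (hs : Convex ℝ s) (hf : ContinuousOn f s)
    (hf' : ∀ x ∈ interior s, HasDerivAt f (f' x) x) (hle : ∀ x ∈ interior s, f' x ≤ -a * f x) :
    AntitoneOn (fun t => exp (a * t) * f t) s := by
  have hmono := monotoneOn_exp_neg_mul_mul (a := -a) hs hf.neg (fun x hx => (hf' x hx).neg)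
    (fun x hx => by simp only [Pi.neg_apply]; linarith [hle x hx])
  intro x hx y hy hxy
  have := hmono hx hy hxy
  simp only [neg_neg, Pi.neg_apply, mul_neg, neg_le_neg_iff] at this
  linarith

end ExpWeighted

theorem tendsto_atTop_of_eventually_le_deriv {f f' : ℝ → ℝ} {c : ℝ} (hc : 0 < c)
    (hf : ∀ᶠ x in atTop, HasDerivAt f (f' x) x) (hle : ∀ᶠ x in atTop, c ≤ f' x) :
    Tendsto f atTop atTop := by
  obtain ⟨T, hT⟩ := eventually_atTop.1 (hf.and hle)
  have hgrowth : ∀ t, T ≤ t → c * (t - T) ≤ f t - f T := by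
    refine fun t ht => (convex_Ici T).mul_sub_le_image_sub_of_le_deriv
      (fun x hx => (hT x hx).1.continuousAt.continuousWithinAt)
      (fun x hx => (hT x (interior_subset hx)).1.differentiableAt.differentiableWithinAt)
      (fun x hx => ?_) T self_mem_Ici t ht ht
    rw [(hT x (interior_subset hx)).1.deriv]
    exact (hT x (interior_subset hx)).2
  refine tendsto_atTop_mono' atTop (f₁ := fun t => f T + c * (t - T)) ?_ ?_
  · filter_upwards [eventually_ge_atTop T] with t ht
    linarith [hgrowth t ht]
  · exact tendsto_atTop_add_const_left _ _
      ((tendsto_atTop_add_const_right _ _ tendsto_id).const_mul_atTop hc)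

theorem deriv_add_mul_nonpos_of_sq_mul_le {a b : ℝ} (ha : 0 ≤ a) {f f' f'' : ℝ → ℝ}
    (hf : ∀ x ∈ Ioi b, HasDerivAt f (f' x) x) (hf' : ∀ x ∈ Ioi b, HasDerivAt f' (f'' x) x)
    (hineq : ∀ x ∈ Ioi b, a ^ 2 * f x ≤ f'' x) (hlim : Tendsto f atTop (𝓝 0))
    {x : ℝ} (hx : x ∈ Ioi b) : f' x + a * f x ≤ 0 := by
  by_contra! hc
  set c := f' x + a * f x
  have hsub : Ici x ⊆ Ioi b := Ici_subset_Ioi.2 hx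
  have hmono : MonotoneOn (fun t => exp (-a * t) * (f' t + a * f t)) (Ici x) := by
    refine monotoneOn_exp_neg_mul_mul (convex_Ici x)
      (fun t ht => ((hf' t (hsub ht)).continuousAt.add
        ((hf t (hsub ht)).continuousAt.const_mul a)).continuousWithinAt)
      (fun t ht => (hf' t (hsub (interior_subset ht))).add
        ((hf t (hsub (interior_subset ht))).const_mul a))
      (fun t ht => ?_)
    linarith [hineq t (hsub (interior_subset ht))]
  have hlower : ∀ t ∈ Ici x, c ≤ f' t + a * f t := fun t ht =>
    calc c ≤ exp (a * (t - x)) * c :=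
          le_mul_of_one_le_left hc.le (one_le_exp (mul_nonneg ha (sub_nonneg.2 ht)))
      _ = exp (a * t) * (exp (-a * x) * c) := by rw [← mul_assoc, ← exp_add]; ring_nf
      _ ≤ exp (a * t) * (exp (-a * t) * (f' t + a * f t)) :=
          mul_le_mul_of_nonneg_left (hmono self_mem_Ici ht ht) (exp_pos _).le
      _ = f' t + a * f t := by rw [← mul_assoc, ← exp_add]; simp
  have hsmall : ∀ᶠ t in atTop, a * f t < c / 2 := by
    have := hlim.const_mul a
    rw [mul_zero] at this
    exact this.eventually (gt_mem_nhds (half_pos hc))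
  have hdiv : Tendsto f atTop atTop := by
    refine tendsto_atTop_of_eventually_le_deriv (half_pos hc)
      (eventually_gt_atTop b |>.mono hf) ?_
    filter_upwards [hsmall, eventually_ge_atTop x] with t hft ht
    linarith [hlower t ht]
  exact not_tendsto_nhds_of_tendsto_atTop hdiv 0 hlim

theorem stmt_0_general (a : ℝ) (ha : 0 < a) (j : ℝ → ℝ)
    (hj : ContDiffOn ℝ 2 j (Set.Ici 0))
    (hineq : ∀ t, 0 ≤ t → a ^ 2 * j t ≤ deriv (deriv j) t)
    (hlim : Filter.Tendsto j Filter.atTop (nhds 0)) :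
    ∀ t, 0 ≤ t → j t ≤ j 0 * Real.exp (-a * t) := by
  have hj' : ∀ x ∈ Ioi (0 : ℝ), HasDerivAt j (deriv j x) x := fun x hx =>
    ((hj.differentiableOn two_ne_zero).differentiableAt (Ici_mem_nhds hx)).hasDerivAt
  have hanti : AntitoneOn (fun t => exp (a * t) * j t) (Ici 0) := by
    refine antitoneOn_exp_mul_mul (convex_Ici 0) hj.continuousOn (by rwa [interior_Ici])
      (fun x hx => ?_)
    rw [interior_Ici] at hx
    have := deriv_add_mul_nonpos_of_sq_mul_le ha.le hj'
      (fun y hy => hj.hasDerivAt_deriv (Ici_mem_nhds hy))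
      (fun y hy => hineq y (le_of_lt hy)) hlim hx
    linarith
  intro t ht
  calc j t = exp (-a * t) * (exp (a * t) * j t) := by rw [← mul_assoc, ← exp_add]; simp
    _ ≤ exp (-a * t) * j 0 := by
        gcongr
        simpa using hanti self_mem_Ici ht ht
    _ = j 0 * exp (-a * t) := mul_comm _ _

/-- Rauch's comparison lemma (Lemma 5.1): a nonnegative function on `[0, ∞)` that is
twice continuously differentiable, satisfies the differential inequality `j'' ≥ a² j`,
and tends to `0` at infinity, is dominated by `j 0 · exp (−a t)`. -/
theorem stmt_0 (a : ℝ) (ha : 0 < a) (j : ℝ → ℝ)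
    (hj : ContDiffOn ℝ 2 j (Set.Ici 0))
    (hpos : ∀ t, 0 ≤ t → 0 ≤ j t)
    (hineq : ∀ t, 0 ≤ t → a ^ 2 * j t ≤ deriv (deriv j) t)
    (hlim : Filter.Tendsto j Filter.atTop (nhds 0)) :
    ∀ t, 0 ≤ t → j t ≤ j 0 * Real.exp (-a * t) :=
  stmt_0_general a ha j hj hineq hlim
end

section
/- Let a > 0 and R > 0. Let j, g : ℝ → ℝ be continuous on [0, R] and twice continuously differentiable on (0, R), and suppose that a²·j(t) − j''(t) ≤ 0 for all t ∈ (0, R), that a²·g(t) − g''(t) = 0 for all t ∈ (0, R), and that j(0) ≤ g(0) and j(R) ≤ g(R). Then j(t) ≤ g(t) for all t ∈ [0, R]. -/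
/-!
At a positive interior maximum `c` of `u = j - g` the second derivative test gives
`u''(c) ≤ 0`, whereas the differential inequalities give `a² u(c) ≤ u''(c)`,
so `a² u(c) ≤ 0`.
-/

open Set Filter Topology

/-- No differentiability is assumed: where `deriv f` is not differentiable,
`deriv (deriv f) c = 0` anyway. -/
theorem IsLocalMax.deriv_deriv_nonpos {f : ℝ → ℝ} {c : ℝ} (hmax : IsLocalMax f c)
    (hc : ContinuousAt f c) : deriv (deriv f) c ≤ 0 := by
  by_contra! hpos
  have hmin : IsLocalMin f c := isLocalMin_of_deriv_deriv_pos hpos hmax.deriv_eq_zero hc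
  have hconst : f =ᶠ[𝓝 c] fun _ ↦ f c := by
    filter_upwards [hmax, hmin] with x hle hge using le_antisymm hle hge
  have hzero : deriv (deriv f) c = 0 := by
    rw [hconst.deriv.deriv_eq]
    simp
  exact hpos.ne' hzero

theorem deriv_deriv_sub_of_contDiffOn {𝕜 F : Type*} [NontriviallyNormedField 𝕜]
    [NormedAddCommGroup F] [NormedSpace 𝕜 F] {f g : 𝕜 → F} {s : Set 𝕜} {x : 𝕜}
    (hs : IsOpen s) (hf : ContDiffOn 𝕜 2 f s) (hg : ContDiffOn 𝕜 2 g s) (hx : x ∈ s) :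
    deriv (deriv (f - g)) x = deriv (deriv f) x - deriv (deriv g) x := by
  have hdiff {h : 𝕜 → F} (hh : ContDiffOn 𝕜 2 h s) {y : 𝕜} (hy : y ∈ s) :
      DifferentiableAt 𝕜 h y ∧ DifferentiableAt 𝕜 (deriv h) y :=
    ⟨(hh.differentiableOn (by norm_num)).differentiableAt (hs.mem_nhds hy),
      ((hh.deriv_of_isOpen hs (m := 1) (by norm_num)).differentiableOn
        (by norm_num)).differentiableAt (hs.mem_nhds hy)⟩
  have hderiv : deriv (f - g) =ᶠ[𝓝 x] deriv f - deriv g := by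
    filter_upwards [hs.mem_nhds hx] with y hy
    exact deriv_sub (hdiff hf hy).1 (hdiff hg hy).1
  rw [hderiv.deriv_eq, deriv_sub (hdiff hf hx).2 (hdiff hg hx).2]

theorem nonpos_of_mul_le_deriv_deriv {u : ℝ → ℝ} {k a b : ℝ} (hk : 0 < k)
    (hu : ContinuousOn u (Icc a b)) (hineq : ∀ t ∈ Ioo a b, k * u t ≤ deriv (deriv u) t)
    (ha : u a ≤ 0) (hb : u b ≤ 0) : ∀ t ∈ Icc a b, u t ≤ 0 := by
  intro t ht
  obtain ⟨c, hc, hmax⟩ := isCompact_Icc.exists_isMaxOn ⟨t, ht⟩ hu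
  by_contra! hpos
  have hc_pos : 0 < u c := hpos.trans_le (hmax ht)
  have hc_mem : c ∈ Ioo a b :=
    ⟨hc.1.lt_of_ne (by rintro rfl; linarith), hc.2.lt_of_ne (by rintro rfl; linarith)⟩
  have hnhds : Icc a b ∈ 𝓝 c := Icc_mem_nhds hc_mem.1 hc_mem.2
  have hconcave := (hmax.isLocalMax hnhds).deriv_deriv_nonpos (hu.continuousAt hnhds)
  nlinarith [hineq c hc_mem, mul_pos hk hc_pos]

theorem stmt_1_general (a R : ℝ) (ha : 0 < a) (j g : ℝ → ℝ)
    (hjc : ContinuousOn j (Set.Icc 0 R))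
    (hgc : ContinuousOn g (Set.Icc 0 R))
    (hjd : ContDiffOn ℝ 2 j (Set.Ioo 0 R))
    (hgd : ContDiffOn ℝ 2 g (Set.Ioo 0 R))
    (hjineq : ∀ t ∈ Set.Ioo 0 R, a ^ 2 * j t - deriv (deriv j) t ≤ 0)
    (hgeq : ∀ t ∈ Set.Ioo 0 R, a ^ 2 * g t - deriv (deriv g) t = 0)
    (h0 : j 0 ≤ g 0) (hRend : j R ≤ g R) :
    ∀ t ∈ Set.Icc 0 R, j t ≤ g t := by
  have hsub : ∀ t ∈ Ioo 0 R, a ^ 2 * (j - g) t ≤ deriv (deriv (j - g)) t := fun t ht ↦ by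
    rw [deriv_deriv_sub_of_contDiffOn isOpen_Ioo hjd hgd ht, Pi.sub_apply]
    linarith [hjineq t ht, hgeq t ht]
  intro t ht
  exact sub_nonpos.1 <| nonpos_of_mul_le_deriv_deriv (pow_pos ha 2) (hjc.sub hgc) hsub
    (sub_nonpos.2 h0) (sub_nonpos.2 hRend) t ht

/-- Maximum-principle step: a subsolution `j` of `u ↦ a²·u − u''` lying below an exact
solution `g` at the endpoints of `[0, R]` lies below it on all of `[0, R]`. -/
theorem stmt_1 (a R : ℝ) (ha : 0 < a) (hR : 0 < R) (j g : ℝ → ℝ)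
    (hjc : ContinuousOn j (Set.Icc 0 R))
    (hgc : ContinuousOn g (Set.Icc 0 R))
    (hjd : ContDiffOn ℝ 2 j (Set.Ioo 0 R))
    (hgd : ContDiffOn ℝ 2 g (Set.Ioo 0 R))
    (hjineq : ∀ t ∈ Set.Ioo 0 R, a ^ 2 * j t - deriv (deriv j) t ≤ 0)
    (hgeq : ∀ t ∈ Set.Ioo 0 R, a ^ 2 * g t - deriv (deriv g) t = 0)
    (h0 : j 0 ≤ g 0) (hRend : j R ≤ g R) :
    ∀ t ∈ Set.Icc 0 R, j t ≤ g t :=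
  stmt_1_general a R ha j g hjc hgc hjd hgd hjineq hgeq h0 hRend
end

section
/- Let a > 0, let j : ℝ → ℝ be twice continuously differentiable on [0, ∞) with j(0) > 0, and let c : ℝ → ℝ be continuous on [0, ∞) with c(t) ≥ 0 for all t ≥ 0. Suppose that j''(t) = j(t) · (c(t) + a²) for all t ≥ 0, that j(t) ≥ j(0) · exp(−a·t) for all t ≥ 0, and that j(t) → 0 as t → ∞. Then j(t) = j(0) · exp(−a·t) for all t ≥ 0, and c(t) = 0 for all t ≥ 0. -/
/-!
Put `g = j - j 0 e^{-a·}`. Then `g ≥ 0`, `g 0 = 0`, `g → 0` and `g'' = j c + a² g ≥ 0`, so `g` is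
convex on `[0, ∞)`. A convex function with a finite limit at infinity is nonincreasing, hence
`g ≡ 0`. Then `j'' = a² j` forces `j c = 0`, so `c` vanishes on `(0, ∞)`, and at `0` by continuity.
-/

open Set Filter Topology Real

section IteratedDeriv

variable {𝕜 F : Type*} [NontriviallyNormedField 𝕜] [NormedAddCommGroup F] [NormedSpace 𝕜 F]

theorem iteratedDeriv_two_eq_deriv_deriv (f : 𝕜 → F) : iteratedDeriv 2 f = deriv (deriv f) := by
  rw [iteratedDeriv_succ, iteratedDeriv_one]

theorem deriv_deriv_sub {f g : 𝕜 → F} {x : 𝕜} (hf : ContDiffAt 𝕜 2 f x)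
    (hg : ContDiffAt 𝕜 2 g x) :
    deriv (deriv (f - g)) x = deriv (deriv f) x - deriv (deriv g) x := by
  simp only [← iteratedDeriv_two_eq_deriv_deriv, iteratedDeriv_sub hf hg]

end IteratedDeriv

theorem deriv_deriv_const_mul_exp_neg_mul (C a t : ℝ) :
    deriv (deriv fun s => C * exp (-a * s)) t = a ^ 2 * (C * exp (-a * t)) := by
  rw [← iteratedDeriv_two_eq_deriv_deriv, iteratedDeriv_const_mul_field,
    iteratedDeriv_exp_const_mul]
  ring

theorem convexOn_Ici_of_deriv2_nonneg {f : ℝ → ℝ} {x₀ : ℝ} (hf : ContDiffOn ℝ 2 f (Ici x₀))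
    (hf'' : ∀ x, x₀ < x → 0 ≤ deriv (deriv f) x) : ConvexOn ℝ (Ici x₀) f := by
  obtain ⟨hdf, -, hdf'⟩ := (contDiffOn_succ_iff_deriv_of_isOpen (n := 1) isOpen_Ioi).1
    (hf.mono Ioi_subset_Ici_self)
  refine convexOn_of_deriv2_nonneg (convex_Ici x₀) hf.continuousOn ?_ ?_ ?_ <;>
    rw [interior_Ici]
  · exact hdf
  · exact hdf'.differentiableOn one_ne_zero
  · exact hf''

/- A secant of positive slope would force `f` to grow at least linearly. -/
theorem ConvexOn.antitoneOn_of_tendsto_atTop {f : ℝ → ℝ} {x₀ L : ℝ}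
    (hf : ConvexOn ℝ (Ici x₀) f) (hL : Tendsto f atTop (𝓝 L)) : AntitoneOn f (Ici x₀) := by
  intro x hx y hy hxy
  by_contra! hlt
  have hxy' : x < y := hxy.lt_of_ne (by rintro rfl; exact lt_irrefl _ hlt)
  set m := (f y - f x) / (y - x)
  have hm : 0 < m := div_pos (sub_pos.2 hlt) (sub_pos.2 hxy')
  have hgrowth : ∀ z, y < z → f y + m * (z - y) ≤ f z := fun z hz => by
    have := hf.slope_mono_adjacent hx (le_trans hy hz.le) hxy' hz
    rw [le_div_iff₀ (sub_pos.2 hz)] at this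
    linarith
  have hline : Tendsto (fun z => f y + m * (z - y)) atTop atTop :=
    tendsto_atTop_add_const_left _ _
      ((tendsto_atTop_add_const_right _ _ tendsto_id).const_mul_atTop hm)
  exact not_tendsto_nhds_of_tendsto_atTop
    (tendsto_atTop_mono' atTop ((eventually_gt_atTop y).mono hgrowth) hline) L hL

theorem ConvexOn.eqOn_of_isMinOn_of_tendsto_atTop {f : ℝ → ℝ} {x₀ L : ℝ}
    (hf : ConvexOn ℝ (Ici x₀) f) (hL : Tendsto f atTop (𝓝 L)) (hmin : IsMinOn f (Ici x₀) x₀) :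
    EqOn f (fun _ => f x₀) (Ici x₀) := fun _ hx =>
  le_antisymm (hf.antitoneOn_of_tendsto_atTop hL self_mem_Ici hx hx) (hmin hx)

theorem convexOn_sub_const_mul_exp_neg_mul {a : ℝ} {j c : ℝ → ℝ}
    (hj : ContDiffOn ℝ 2 j (Ici 0)) (hj0 : 0 ≤ j 0) (hcpos : ∀ t, 0 ≤ t → 0 ≤ c t)
    (heq : ∀ t, 0 ≤ t → deriv (deriv j) t = j t * (c t + a ^ 2))
    (hlower : ∀ t, 0 ≤ t → j 0 * exp (-a * t) ≤ j t) :
    ConvexOn ℝ (Ici 0) (j - fun t => j 0 * exp (-a * t)) := by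
  have hE : ContDiff ℝ 2 fun t => j 0 * exp (-a * t) := by fun_prop
  refine convexOn_Ici_of_deriv2_nonneg (hj.sub hE.contDiffOn) fun t ht => ?_
  rw [deriv_deriv_sub (hj.contDiffAt (Ici_mem_nhds ht)) hE.contDiffAt, heq t ht.le,
    deriv_deriv_const_mul_exp_neg_mul]
  have hEt : 0 ≤ j 0 * exp (-a * t) := mul_nonneg hj0 (exp_pos _).le
  nlinarith [hcpos t ht.le, hlower t ht.le, sq_nonneg a]

/-- Analytic core of Section 5: if `j'' = j·(c + a²)` with `c ≥ 0`, `j(t) ≥ j(0)e^{−at}`,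
and `j → 0` at infinity, then `j(t) = j(0)e^{−at}` and `c ≡ 0` on `[0, ∞)`. -/
theorem stmt_4 (a : ℝ) (ha : 0 < a) (j c : ℝ → ℝ)
    (hj : ContDiffOn ℝ 2 j (Set.Ici 0))
    (hj0 : 0 < j 0)
    (hc : ContinuousOn c (Set.Ici 0))
    (hcpos : ∀ t, 0 ≤ t → 0 ≤ c t)
    (heq : ∀ t, 0 ≤ t → deriv (deriv j) t = j t * (c t + a ^ 2))
    (hlower : ∀ t, 0 ≤ t → j 0 * Real.exp (-a * t) ≤ j t)
    (hlim : Filter.Tendsto j Filter.atTop (nhds 0)) :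
    (∀ t, 0 ≤ t → j t = j 0 * Real.exp (-a * t)) ∧ (∀ t, 0 ≤ t → c t = 0) := by
  set E : ℝ → ℝ := fun t => j 0 * exp (-a * t)
  have hEtend : Tendsto E atTop (𝓝 0) := by
    simpa [E] using (tendsto_exp_neg_atTop_nhds_zero.comp
      (tendsto_id.const_mul_atTop ha)).const_mul (j 0)
  have hjE : ∀ t, 0 ≤ t → j t = E t := by
    have hconst := (convexOn_sub_const_mul_exp_neg_mul hj hj0.le hcpos heq hlower)
      |>.eqOn_of_isMinOn_of_tendsto_atTop (sub_self (0 : ℝ) ▸ hlim.sub hEtend)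
        fun t ht => by simpa using hlower t ht
    intro t ht
    simpa [E, sub_eq_zero] using hconst ht
  refine ⟨hjE, ?_⟩
  have hc0 : EqOn c 0 (Ioi 0) := fun t ht => by
    have hj'' : deriv (deriv j) t = a ^ 2 * E t := by
      rw [(eventuallyEq_of_mem (Ioi_mem_nhds ht) fun s hs => hjE s hs.le).deriv.deriv_eq,
        deriv_deriv_const_mul_exp_neg_mul]
    have h := heq t ht.le
    rw [hj'', hjE t ht.le] at h
    exact (mul_eq_zero.1 (by linarith : E t * c t = 0)).resolve_left
      (mul_pos hj0 (exp_pos _)).ne'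
  exact fun t ht => hc0.of_subset_closure hc continuousOn_const Ioi_subset_Ici_self
    (by rw [closure_Ioi]) ht
end
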